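/- arXiv:2308.05692 — 2 statements merged into one kernel-verified Lean document; each statement's English description precedes it below -/
import Mathlib

section
/- Let n divide N and fix t ∈ {0,...,N-2}. If i, i* ∈ {0,...,N-1} satisfy ⌊i/n⌋ ≠ ⌊i*/n⌋ and i ≡ i* (mod n), then ⌊((i+t+1) mod N)/n⌋ ≠ ⌊((i*+t+1) mod N)/n⌋. -/
/-!
Since `n ∣ N`, reducing modulo `N` does not change residues modulo `n`, so the two destinations
share their spine as the sources do. A number below `N` is determined by its leaf and its spine,
so equal destination leaves would force equal destinations; but `x ↦ (x + t + 1) % N` is injective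
on `[0, N)`, so the sources would coincide, contradicting that they lie on different leaves.
-/

namespace Nat

theorem add_mod_modEq_of_dvd {n N a b : ℕ} (hdvd : n ∣ N) (h : a ≡ b [MOD n]) (s : ℕ) :
    (a + s) % N ≡ (b + s) % N [MOD n] :=
  ((mod_modEq _ _).of_dvd hdvd).trans <|
    (h.add_right s).trans ((mod_modEq _ _).of_dvd hdvd).symm

theorem eq_of_add_mod_eq {N a b s : ℕ} (ha : a < N) (hb : b < N)
    (h : (a + s) % N = (b + s) % N) : a = b :=
  (ModEq.add_right_cancel' s h).eq_of_lt_of_lt ha hb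

end Nat

theorem stmt_4_general (N n t : ℕ) (hdvd : n ∣ N)
    (i i' : ℕ) (hi : i < N) (hi' : i' < N)
    (hleaf : i / n ≠ i' / n) (hspine : i % n = i' % n) :
    ((i + t + 1) % N) / n ≠ ((i' + t + 1) % N) / n := by
  intro hdest
  have hspine_dest : (i + (t + 1)) % N ≡ (i' + (t + 1)) % N [MOD n] :=
    Nat.add_mod_modEq_of_dvd hdvd hspine (t + 1)
  rw [← Nat.add_assoc, ← Nat.add_assoc] at hspine_dest
  have hsrc : i = i' :=
    Nat.eq_of_add_mod_eq (s := t + 1) hi hi' (Nat.ext_div_modEq hdest hspine_dest)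
  exact hleaf (congrArg (· / n) hsrc)

/-- Pairwise-exchange AlltoAll: at step `t`, GPU `i` sends to `(i+t+1) mod N`;
two cross-leaf flows from different leaves using the same spine never converge
on the same destination leaf. -/
theorem stmt_4 (N n t : ℕ) (hn : 0 < n) (hdvd : n ∣ N) (ht : t ≤ N - 2)
    (i i' : ℕ) (hi : i < N) (hi' : i' < N)
    (hleaf : i / n ≠ i' / n) (hspine : i % n = i' % n) :
    ((i + t + 1) % N) / n ≠ ((i' + t + 1) % N) / n :=
  stmt_4_general N n t hdvd i i' hi hi' hleaf hspine
end

section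
/- Fix positive integers L (leaves) and n (server-facing ports per leaf, equal to spine-facing ports). Suppose each leaf m has a bijection f_m from its server-facing ports {0,...,n-1} to its spine-facing ports {0,...,n-1}, and routing sends a cross-leaf packet from source port i of leaf m through uplink (spine) f_m(i). Let σ be a permutation of the GPU set such that: (leaf-wise condition) there is a permutation π of the leaves, with σ mapping every GPU on leaf j to a GPU on leaf π(j) whenever the source and destination leaves differ. Then no spine-to-leaf downlink carries two distinct cross-leaf flows, i.e., for any two distinct source GPUs s ≠ s' with cross-leaf flows, either their uplink spines differ or their destination leaves differ. -/
/-! Two cross-leaf flows that share a downlink have the same destination leaf. Since σ moves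
every leaf by the single permutation π, they also share their source leaf, and on one leaf the
uplink spine determines the source port because `f m` is a bijection. -/

section LeafSpine

variable {Leaf Port Spine : Type*}

theorem eq_of_fst_eq_of_uplink_eq (f : Leaf → Port ≃ Spine) {s s' : Leaf × Port}
    (hleaf : s.1 = s'.1) (hspine : f s.1 s.2 = f s'.1 s'.2) : s = s' :=
  Prod.ext hleaf <| (f s.1).injective <| hspine.trans <| by rw [hleaf]

theorem fst_eq_of_leafwise_of_dst_eq (σ : Equiv.Perm (Leaf × Port)) (π : Equiv.Perm Leaf)
    (hleafwise : ∀ g : Leaf × Port, (σ g).1 ≠ g.1 → (σ g).1 = π g.1) {s s' : Leaf × Port}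
    (hc : (σ s).1 ≠ s.1) (hc' : (σ s').1 ≠ s'.1) (hdst : (σ s).1 = (σ s').1) : s.1 = s'.1 :=
  π.injective <| by rw [← hleafwise s hc, ← hleafwise s' hc', hdst]

end LeafSpine

/-- Lemma 1 (downlink half): in a Leaf-Spine network with `L` leaves and `n`
spines, with per-leaf port-to-spine bijections `f m` and a leaf-wise
permutation `σ` (inducing a leaf permutation `π`), no spine-to-leaf downlink
carries two distinct cross-leaf flows: the uplink spines differ or the
destination leaves differ. -/
theorem stmt_6 (L n : ℕ) (f : Fin L → Fin n ≃ Fin n)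
    (σ : Equiv.Perm (Fin L × Fin n)) (π : Equiv.Perm (Fin L))
    (hleafwise : ∀ g : Fin L × Fin n, (σ g).1 ≠ g.1 → (σ g).1 = π g.1) :
    ∀ s s' : Fin L × Fin n, s ≠ s' →
      (σ s).1 ≠ s.1 → (σ s').1 ≠ s'.1 →
      f s.1 s.2 ≠ f s'.1 s'.2 ∨ (σ s).1 ≠ (σ s').1 := by
  intro s s' hne hc hc'
  by_contra! hshared
  obtain ⟨hspine, hdst⟩ := hshared
  have hsrc : s.1 = s'.1 := fst_eq_of_leafwise_of_dst_eq σ π hleafwise hc hc' hdst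
  exact hne (eq_of_fst_eq_of_uplink_eq f hsrc hspine)
end
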